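/- arXiv:1305.5795 — 3 statements merged into one kernel-verified Lean document; each statement's English description precedes it below -/
import Mathlib

section
/- Let Δ be the broken circuit complex of an ordered matroid (M,<) and Σ the independence (matroid) complex of M. For a face F of Δ, let V₁ and V₂ be the vertex sets of link_Δ F and link_Σ F respectively. If V₂ \ V₁ is nonempty, then there exists u ∈ V₁ such that u < v for all v ∈ V₂ \ V₁. -/
open Set Polynomial Matroid CategoryTheory

universe u

namespace PaperBC

variable {α : Type*}

/-- A circuit of a matroid: a minimal dependent subset of the ground set. -/
def MCircuit (M : Matroid α) (C : Set α) : Prop :=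
  ¬ M.Indep C ∧ C ⊆ M.E ∧ ∀ D, D ⊂ C → M.Indep D

/-- A broken circuit with respect to an order relation `r` (to be read as `≤`):
a circuit with its least element removed. -/
def BrokenCircuit (r : α → α → Prop) (M : Matroid α) (B : Set α) : Prop :=
  ∃ C e, MCircuit M C ∧ e ∈ C ∧ (∀ x ∈ C, r e x) ∧ B = C \ {e}

/-- The broken circuit complex: subsets of the ground set containing no broken circuit. -/
def BCC (r : α → α → Prop) (M : Matroid α) : Set (Set α) :=
  {F | F ⊆ M.E ∧ ∀ B, BrokenCircuit r M B → ¬ B ⊆ F}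

/-- The independence (matroid) complex. -/
def IndepComplex (M : Matroid α) : Set (Set α) := {F | M.Indep F}

/-- The link of a face in a complex. -/
def linkOf (Δ : Set (Set α)) (F : Set α) : Set (Set α) :=
  {G | F ∪ G ∈ Δ ∧ Disjoint F G}

/-- Vertex set of a complex. -/
def vertexSet (Δ : Set (Set α)) : Set α := {v | {v} ∈ Δ}

def dimLE (Δ : Set (Set α)) (d : ℕ) : Prop := ∀ s ∈ Δ, s.ncard ≤ d + 1

def dimEq (Δ : Set (Set α)) (d : ℕ) : Prop := dimLE Δ d ∧ ∃ s ∈ Δ, s.ncard = d + 1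

/-- `Δ` is an `n`-gon (cycle) as a 1-dimensional complex. -/
def IsNGon (Δ : Set (Set α)) (n : ℕ) : Prop :=
  3 ≤ n ∧ ∃ v : ℕ → α, (∀ i j, i < n → j < n → v i = v j → i = j) ∧
    Δ = {s | s = ∅ ∨ (∃ i < n, s = {v i}) ∨ ∃ i < n, s = {v i, v ((i + 1) % n)}}

/-- `Δ` is a path on `m` vertices as a simplicial complex. -/
def IsPathComplex (Δ : Set (Set α)) (m : ℕ) : Prop :=
  1 ≤ m ∧ ∃ v : ℕ → α, (∀ i j, i < m → j < m → v i = v j → i = j) ∧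
    Δ = {s | s = ∅ ∨ (∃ i < m, s = {v i}) ∨ ∃ i, i + 1 < m ∧ s = {v i, v (i + 1)}}

/-- The h-polynomial `h(t) = f(t-1)` of a complex with prescribed rank `r`,
where `f(t) = ∑ fᵢ t^{r-i}`. -/
noncomputable def hPoly (Δ : Set (Set α)) (r : ℕ) : Polynomial ℤ :=
  ∑ i ∈ Finset.range (r + 1),
    Polynomial.C (({s ∈ Δ | s.ncard = i}.ncard : ℤ)) * (X - 1) ^ (r - i)

/-- The `i`-th entry of the h-vector: the coefficient of `t^{r-i}` in the h-polynomial. -/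
noncomputable def hVec (Δ : Set (Set α)) (r i : ℕ) : ℤ := (hPoly Δ r).coeff (r - i)

/-- The rank of a matroid, as the cardinality of some base. -/
noncomputable def rk (M : Matroid α) : ℕ := M.exists_isBase.choose.ncard

/-- A simple matroid: every circuit has at least 3 elements. -/
def MSimple (M : Matroid α) : Prop := ∀ C, MCircuit M C → 3 ≤ C.ncard

/-- A connected matroid: any two distinct elements lie on a common circuit. -/
def MConnected (M : Matroid α) : Prop :=
  M.E.Nonempty ∧ ∀ e ∈ M.E, ∀ f ∈ M.E, e ≠ f → ∃ C, MCircuit M C ∧ e ∈ C ∧ f ∈ C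

def MLoop (M : Matroid α) (e : α) : Prop := e ∈ M.E ∧ ¬ M.Indep {e}

def MColoop (M : Matroid α) (e : α) : Prop := e ∈ M.E ∧ ∀ B, M.IsBase B → e ∈ B

/-- `M` is the parallel connection of `M₁` and `M₂` relative to `e`,
characterized by its set of circuits. -/
def IsParallelConn (M M₁ M₂ : Matroid α) (e : α) : Prop :=
  M₁.E ∩ M₂.E = {e} ∧ M.E = M₁.E ∪ M₂.E ∧
  ¬ MLoop M₁ e ∧ ¬ MColoop M₁ e ∧ ¬ MLoop M₂ e ∧ ¬ MColoop M₂ e ∧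
  ∀ C, MCircuit M C ↔ (MCircuit M₁ C ∨ MCircuit M₂ C ∨
    ∃ C₁ C₂, MCircuit M₁ C₁ ∧ MCircuit M₂ C₂ ∧ e ∈ C₁ ∧ e ∈ C₂ ∧ C = (C₁ ∪ C₂) \ {e})

/-- `M` is the series connection of `M₁` and `M₂` relative to `e`,
characterized by its set of circuits. -/
def IsSeriesConn (M M₁ M₂ : Matroid α) (e : α) : Prop :=
  M₁.E ∩ M₂.E = {e} ∧ M.E = M₁.E ∪ M₂.E ∧
  ¬ MLoop M₁ e ∧ ¬ MColoop M₁ e ∧ ¬ MLoop M₂ e ∧ ¬ MColoop M₂ e ∧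
  ∀ C, MCircuit M C ↔ ((MCircuit M₁ C ∧ e ∉ C) ∨ (MCircuit M₂ C ∧ e ∉ C) ∨
    ∃ C₁ C₂, MCircuit M₁ C₁ ∧ MCircuit M₂ C₂ ∧ e ∈ C₁ ∧ e ∈ C₂ ∧ C = C₁ ∪ C₂)

/-- Contraction of a single element, via duality: `M/e = (M* − e)*`. -/
noncomputable def contractElem (M : Matroid α) (e : α) : Matroid α :=
  (M✶ ↾ (M.E \ {e}))✶

/-- `N` is a simplification of `M`: a simple restriction of `M` to a set meeting
every parallel class of non-loops. -/
def IsSimplificationOf (N M : Matroid α) : Prop :=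
  ∃ S ⊆ M.E, N = M ↾ S ∧ MSimple N ∧
    ∀ x ∈ M.E, M.Indep {x} → ∃ y ∈ S, x = y ∨ MCircuit M {x, y}

/-- `M` is (a copy of) the uniform matroid `U_{m,m+1}`. -/
def IsUnifNearCircuit (M : Matroid α) (m : ℕ) : Prop :=
  M.E.ncard = m + 1 ∧ ∀ I, M.Indep I ↔ I ⊆ M.E ∧ I.ncard ≤ m

/-- The minimal broken circuits of an ordered matroid. -/
def MinBrokenCircuit (r : α → α → Prop) (M : Matroid α) (B : Set α) : Prop :=
  BrokenCircuit r M B ∧ ∀ B', BrokenCircuit r M B' → B' ⊆ B → B' = B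

/-- A (nonempty) connected component of a matroid: a circuit-closed subset of the
ground set on which the restriction is connected. -/
def IsComponent (M : Matroid α) (S : Set α) : Prop :=
  S ⊆ M.E ∧ S.Nonempty ∧ MConnected (M ↾ S) ∧
    ∀ C, MCircuit M C → C ⊆ S ∨ Disjoint C S

/-- Series-parallel networks: matroids obtained from a two-element circuit by
iterated series and parallel connections. -/
inductive IsSPNetwork : Matroid α → Prop
  | twoCircuit (M : Matroid α) (h1 : M.E.ncard = 2) (h2 : MCircuit M M.E) : IsSPNetwork M
  | series (M N P : Matroid α) (e : α) (h1 : P.E.ncard = 2) (h2 : MCircuit P P.E)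
      (hN : IsSPNetwork N) (h : IsSeriesConn M N P e) : IsSPNetwork M
  | parallel (M N P : Matroid α) (e : α) (h1 : P.E.ncard = 2) (h2 : MCircuit P P.E)
      (hN : IsSPNetwork N) (h : IsParallelConn M N P e) : IsSPNetwork M

/-- Iterated parallel connections of uniform matroids `U_{m,m+1}`, `m ≥ 2`. -/
inductive IsIterParallelUnif : Matroid α → Prop
  | unif (M : Matroid α) (m : ℕ) (h2 : 2 ≤ m) (h : IsUnifNearCircuit M m) :
      IsIterParallelUnif M
  | parallel (M N P : Matroid α) (e : α) (m : ℕ) (h2 : 2 ≤ m)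
      (hN : IsIterParallelUnif N) (hP : IsUnifNearCircuit P m)
      (h : IsParallelConn M N P e) : IsIterParallelUnif M

/-- `M` is graphic: its circuits are the edge sets of cycles of some graph. -/
def IsGraphic (M : Matroid α) : Prop :=
  ∃ (V : Type) (G : SimpleGraph V) (f : α → Sym2 V),
    Set.InjOn f M.E ∧ (∀ a ∈ M.E, f a ∈ G.edgeSet) ∧
    ∀ C, MCircuit M C ↔ C ⊆ M.E ∧
      ∃ (u : V) (w : G.Walk u u), w.IsCycle ∧ f '' C = {x | x ∈ w.edges}

/-- A minimal non-face of a complex. -/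
def MinNonFace (Δ : Set (Set α)) (s : Set α) : Prop :=
  s ⊆ vertexSet Δ ∧ s ∉ Δ ∧ ∀ t, t ⊂ s → t ∈ Δ

/-- A complete intersection complex: the minimal non-faces are pairwise disjoint
(equivalently, the Stanley–Reisner ring is a complete intersection). -/
def IsCIComplex (Δ : Set (Set α)) : Prop :=
  ∀ s t, MinNonFace Δ s → MinNonFace Δ t → s ≠ t → Disjoint s t

/-- The Stanley–Reisner ring of a complex over a field `K`. -/
abbrev SRRing (K : Type) [Field K] (Δ : Set (Set α)) :=
  MvPolynomial (vertexSet Δ) K ⧸ (Ideal.span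
    {m : MvPolynomial (vertexSet Δ) K | ∃ s : Finset (vertexSet Δ),
      (Subtype.val '' (s : Set (vertexSet Δ))) ∉ Δ ∧ m = ∏ i ∈ s, MvPolynomial.X i})

/-- A Gorenstein ring: Noetherian with finite self-injective dimension
(expressed by eventual vanishing of `Ext^i(—, R)`). -/
def IsGorensteinRing (R : Type u) [CommRing R] : Prop :=
  IsNoetherianRing R ∧ ∃ n : ℕ, ∀ (M : ModuleCat.{u} R) (i : ℕ), n < i →
    Subsingleton (((Ext R (ModuleCat.{u} R) i).obj (Opposite.op M)).obj (ModuleCat.of R R))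

/-! For `v ∈ V₂ \ V₁` the independent set `F ∪ {v}` contains a broken circuit `C \ {e}`; since `F`
contains none, `v ∈ C \ {e}` and so `e < v`. The least `u` among all these elements `e` is a vertex
of the link of `F` in the broken circuit complex, by circuit elimination. -/

variable {M : Matroid α} {C F S : Set α} {e u v : α}

theorem mCircuit_iff_isCircuit : MCircuit M C ↔ M.IsCircuit C := by
  simp only [MCircuit, isCircuit_iff_forall_ssubset, Dep, and_assoc]

theorem mem_vertexSet_linkOf {Δ : Set (Set α)} :
    v ∈ vertexSet (linkOf Δ F) ↔ F ∪ {v} ∈ Δ ∧ v ∉ F := by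
  simp [vertexSet, linkOf, disjoint_singleton_right]

variable [LinearOrder α]

/-- The least elements of those circuits whose broken circuit lies in `S`. -/
def brokenCircuitLeaders (M : Matroid α) (S : Set α) : Set α :=
  {e | ∃ C, M.IsCircuit C ∧ e ∈ C ∧ (∀ x ∈ C, e ≤ x) ∧ C \ {e} ⊆ S}

theorem brokenCircuitLeaders_subset_ground : brokenCircuitLeaders M S ⊆ M.E :=
  fun _ ⟨_, hC, heC, _⟩ ↦ hC.subset_ground heC

theorem mem_bcc_iff : S ∈ BCC (· ≤ ·) M ↔ S ⊆ M.E ∧ brokenCircuitLeaders M S = ∅ := by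
  simp only [BCC, BrokenCircuit, brokenCircuitLeaders, mCircuit_iff_isCircuit,
    eq_empty_iff_forall_notMem, mem_ofPred_eq]
  grind

theorem notMem_of_mem_brokenCircuitLeaders (hS : M.Indep S)
    (he : e ∈ brokenCircuitLeaders M S) : e ∉ S := by
  obtain ⟨C, hC, heC, -, hCS⟩ := he
  intro heS
  refine hC.not_indep (hS.subset fun x hx ↦ ?_)
  obtain rfl | hxe := eq_or_ne x e
  · exact heS
  · exact hCS ⟨hx, hxe⟩

theorem mem_sdiff_of_sdiff_subset_union_singleton (hF : F ∈ BCC (· ≤ ·) M)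
    (hC : M.IsCircuit C) (heC : e ∈ C) (hmin : ∀ x ∈ C, e ≤ x) (hsub : C \ {e} ⊆ F ∪ {v}) :
    v ∈ C \ {e} := by
  by_contra hv
  have he : e ∈ brokenCircuitLeaders M F := ⟨C, hC, heC, hmin, fun x hx ↦
    (hsub hx).resolve_right fun hxv ↦ hv (mem_singleton_iff.1 hxv ▸ hx)⟩
  simp [(mem_bcc_iff.1 hF).2] at he

theorem lt_of_mem_brokenCircuitLeaders (hF : F ∈ BCC (· ≤ ·) M)
    (he : e ∈ brokenCircuitLeaders M (F ∪ {v})) : e < v := by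
  obtain ⟨C, hC, heC, hmin, hsub⟩ := he
  obtain ⟨hvC, hve⟩ := mem_sdiff_of_sdiff_subset_union_singleton hF hC heC hmin hsub
  exact (hmin v hvC).lt_of_ne (Ne.symm hve)

/-- If `u` is the least leader of `F ∪ {v}`, then `F ∪ {u}` has no leader `e'`: eliminating `u`
from the two circuits led by `u` and `e'` gives a circuit inside `F ∪ {v, e'}`, which must contain
`e'` (as `F ∪ {v}` is independent) and is then led by `e' < u`. -/
theorem union_singleton_mem_bcc_of_isLeast (hF : F ∈ BCC (· ≤ ·) M) (hv : M.Indep (F ∪ {v}))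
    (hu : IsLeast (brokenCircuitLeaders M (F ∪ {v})) u) : F ∪ {u} ∈ BCC (· ≤ ·) M := by
  obtain ⟨⟨C, hC, huC, hCmin, hCsub⟩, hlow⟩ := hu
  refine mem_bcc_iff.2 ⟨union_subset (mem_bcc_iff.1 hF).1
    (singleton_subset_iff.2 (hC.subset_ground huC)), eq_empty_iff_forall_notMem.2 ?_⟩
  rintro e' ⟨C', hC', he'C', he'min, hC'sub⟩
  obtain ⟨huC', hue'⟩ := mem_sdiff_of_sdiff_subset_union_singleton hF hC' he'C' he'min hC'sub
  have he'u : e' < u := (he'min u huC').lt_of_ne (Ne.symm hue')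
  have he'C : e' ∉ C := fun h ↦ (hCmin e' h).not_gt he'u
  obtain ⟨D, hDsub, hD⟩ := hC.elimination hC' (fun h ↦ he'C (h ▸ he'C')) u
  have hDsub' : ∀ x ∈ D, x ≠ e' → x ∈ F ∪ {v} := by
    intro x hx hxe'
    obtain ⟨hxC | hxC', hxu⟩ := hDsub hx
    · exact hCsub ⟨hxC, hxu⟩
    · exact Or.inl ((hC'sub ⟨hxC', hxe'⟩).resolve_right hxu)
  by_cases he'D : e' ∈ D
  · have hDmin : ∀ x ∈ D, e' ≤ x := fun x hx ↦ (hDsub hx).1.elim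
      (fun hxC ↦ he'u.le.trans (hCmin x hxC)) (he'min x)
    have hlead : e' ∈ brokenCircuitLeaders M (F ∪ {v}) :=
      ⟨D, hD, he'D, hDmin, fun x hx ↦ hDsub' x hx.1 hx.2⟩
    exact (hlow hlead).not_gt he'u
  · exact hD.not_indep (hv.subset fun x hx ↦ hDsub' x hx (ne_of_mem_of_not_mem hx he'D))

/-- Lemma 3.3 of the paper. -/
theorem brokenCircuit_link_vertex_min {α : Type*} [LinearOrder α] (M : Matroid α)
    (hfin : M.E.Finite) (F : Set α) (hF : F ∈ BCC (· ≤ ·) M)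
    (V₁ V₂ : Set α)
    (hV₁ : V₁ = vertexSet (linkOf (BCC (· ≤ ·) M) F))
    (hV₂ : V₂ = vertexSet (linkOf (IndepComplex M) F))
    (hne : (V₂ \ V₁).Nonempty) :
    ∃ u ∈ V₁, ∀ v ∈ V₂ \ V₁, u < v := by
  subst hV₁ hV₂
  set W := vertexSet (linkOf (IndepComplex M) F) \ vertexSet (linkOf (BCC (· ≤ ·) M) F)
  have hW : ∀ v ∈ W, M.Indep (F ∪ {v}) ∧ (brokenCircuitLeaders M (F ∪ {v})).Nonempty := by
    rintro v ⟨hv₂, hv₁⟩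
    obtain ⟨hvI, hvF⟩ := mem_vertexSet_linkOf.1 hv₂
    have hvB : F ∪ {v} ∉ BCC (· ≤ ·) M := fun h ↦ hv₁ (mem_vertexSet_linkOf.2 ⟨h, hvF⟩)
    rw [mem_bcc_iff, not_and, ← ne_eq, ← nonempty_iff_ne_empty] at hvB
    exact ⟨hvI, hvB hvI.subset_ground⟩
  set T := ⋃ v ∈ W, brokenCircuitLeaders M (F ∪ {v})
  have hTfin : T.Finite :=
    hfin.subset (iUnion₂_subset fun _ _ ↦ brokenCircuitLeaders_subset_ground)
  obtain ⟨v₀, hv₀⟩ := hne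
  obtain ⟨u, huT, hmin⟩ := exists_min_image T id hTfin
    ((hW v₀ hv₀).2.mono (subset_biUnion_of_mem hv₀))
  obtain ⟨v, hvW, hu⟩ := mem_iUnion₂.1 huT
  refine ⟨u, ?_, fun w hw ↦ ?_⟩
  · have hleast : IsLeast (brokenCircuitLeaders M (F ∪ {v})) u :=
      ⟨hu, fun e he ↦ hmin e (mem_biUnion hvW he)⟩
    exact mem_vertexSet_linkOf.2 ⟨union_singleton_mem_bcc_of_isLeast hF (hW v hvW).1 hleast,
      fun huF ↦ notMem_of_mem_brokenCircuitLeaders (hW v hvW).1 hu (Or.inl huF)⟩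
  · obtain ⟨e, he⟩ := (hW w hw).2
    exact (hmin e (mem_biUnion hw he)).trans_lt (lt_of_mem_brokenCircuitLeaders hF he)

end PaperBC
end

section
/- Let G be a simple 2-connected graph with at least two edges whose cycle matroid M(G) is a series-parallel network (equivalently, G has no subdivision of K₄ as a subgraph). Then G has a vertex of degree 2. -/
open Set Polynomial Matroid CategoryTheory

universe u

namespace PaperBC

variable {α : Type*}

/-- `G` contains a subdivision of `K₄`: four branch vertices joined by pairwise
internally disjoint paths. -/
def HasK4Subdivision {V : Type*} (G : SimpleGraph V) : Prop :=
  ∃ (b : Fin 4 → V) (p : ∀ _ _ : Fin 4, Σ' (x : V) (y : V), G.Walk x y),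
    Function.Injective b ∧
    (∀ i j : Fin 4, i ≠ j → (p i j).1 = b i ∧ (p i j).2.1 = b j) ∧
    (∀ i j : Fin 4, i ≠ j → (p i j).2.2.IsPath) ∧
    (∀ i j : Fin 4, i ≠ j → ∀ k, b k ∈ (p i j).2.2.support → k = i ∨ k = j) ∧
    (∀ i j i' j' : Fin 4, i ≠ j → i' ≠ j' → ({i, j} : Set (Fin 4)) ≠ {i', j'} →
      ∀ x, x ∈ (p i j).2.2.support → x ∈ (p i' j').2.2.support → x ∈ Set.range b)

/-!
A graph with an edge and no vertex of degree one or two has a `K₄` minor. This goes by induction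
on the number of edges: an edge between two vertices of degree at least four can be deleted, and at
a vertex `v` of degree three some contraction keeps all degrees away from one and two, unless the
neighbours of `v` span a triangle, which completes a `K₄`. The delicate configuration is a
diamond: `v` and a neighbour `b`, both of degree three, adjacent to the same non-adjacent pair
`a`, `c`; there the diamond is replaced by the edge `ac`.

As `K₄` is cubic, a `K₄` minor yields a `K₄` subdivision: inside each branch set, three paths
from a common centre reach the edges to the other three branch sets.

A 2-connected graph on at least three vertices has minimum degree at least two, so if no vertex
has degree two, the first statement applies.
-/

theorem ncard_le_ncard_of_insert_sdiff_subset {s t : Set α} [Finite α] {a b : α}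
    (ha : a ∈ s) (hb : b ∉ s) (h : insert b (s \ {a}) ⊆ t) : s.ncard ≤ t.ncard := by
  calc s.ncard = (insert b (s \ {a})).ncard := by
        rw [Set.ncard_insert_of_notMem (fun h => hb h.1), Set.ncard_sdiff_singleton_add_one ha]
    _ ≤ t.ncard := Set.ncard_le_ncard h

section

open SimpleGraph Function

variable {V : Type*} {G H K : SimpleGraph V}

def PreconnectedOn (G : SimpleGraph V) (S : Set V) : Prop :=
  ∀ x ∈ S, ∀ y ∈ S, ∃ w : G.Walk x y, ∀ z ∈ w.support, z ∈ S

lemma exists_walk_to_first_mem {u v : V} (w : G.Walk u v) {T : Set V} (hv : v ∈ T) :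
    ∃ y ∈ T, ∃ w' : G.Walk u y, (∀ z ∈ w'.support, z ∈ w.support) ∧
      ∀ z ∈ w'.support, z ∈ T → z = y := by
  induction w with
  | nil => exact ⟨_, hv, .nil, by simp, by simp⟩
  | @cons u _ _ h t ih =>
    by_cases hu : u ∈ T
    · exact ⟨u, hu, .nil, by simp, by simp⟩
    obtain ⟨y, hy, w', hsub, hfirst⟩ := ih hv
    refine ⟨y, hy, .cons h w', ?_, ?_⟩
    · simp only [Walk.support_cons, List.mem_cons, forall_eq_or_imp, true_or, true_and]
      exact fun z hz => .inr (hsub z hz)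
    · simp only [Walk.support_cons, List.mem_cons, forall_eq_or_imp]
      exact ⟨fun h => absurd h hu, hfirst⟩

lemma isPath_append_cons_reverse {a b x y : V} {p : G.Walk a x} {q : G.Walk b y}
    (hp : p.IsPath) (hq : q.IsPath) (hxy : G.Adj x y)
    (hpq : ∀ z ∈ p.support, z ∉ q.support) : (p.append (.cons hxy q.reverse)).IsPath := by
  rw [Walk.isPath_def, Walk.support_append, Walk.support_cons, List.tail_cons,
    Walk.support_reverse]
  exact hp.support_nodup.append (List.nodup_reverse.mpr hq.support_nodup)
    fun z hz hz' => hpq z hz (List.mem_reverse.mp hz')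

lemma mem_support_append_cons_reverse {a b x y z : V} {p : G.Walk a x} {q : G.Walk b y}
    {hxy : G.Adj x y} (hz : z ∈ (p.append (.cons hxy q.reverse)).support) :
    z ∈ p.support ∨ z ∈ q.support := by
  simp only [Walk.mem_support_append_iff, Walk.support_cons, Walk.support_reverse,
    List.mem_cons, List.mem_reverse] at hz
  rcases hz with hz | rfl | hz
  exacts [.inl hz, .inl p.end_mem_support, .inr hz]

structure IsSpider {ι : Type*} (G : SimpleGraph V) (S : Set V) (c : V)
    (arm : ι → Σ' y, G.Walk c y) : Prop where
  isPath : ∀ j, (arm j).2.IsPath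
  support_subset : ∀ j, ∀ z ∈ (arm j).2.support, z ∈ S
  eq_of_mem : ∀ j k, j ≠ k → ∀ z ∈ (arm j).2.support, z ∈ (arm k).2.support → z = c

lemma IsSpider.comp {ι κ : Type*} {S : Set V} {c : V} {arm : ι → Σ' y, G.Walk c y}
    (h : IsSpider G S c arm) {f : κ → ι} (hf : Injective f) :
    IsSpider G S c (arm ∘ f) :=
  ⟨fun j => h.isPath (f j), fun j => h.support_subset (f j),
    fun j k hjk => h.eq_of_mem (f j) (f k) (hf.ne hjk)⟩

lemma exists_spider_fin_three {S : Set V} (hS : PreconnectedOn G S) (t : Fin 3 → V)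
    (ht : ∀ k, t k ∈ S) :
    ∃ c ∈ S, ∃ arm : Fin 3 → Σ' y, G.Walk c y,
      IsSpider G S c arm ∧ ∀ k, (arm k).1 = t k := by
  classical
  obtain ⟨p, hpS⟩ := hS _ (ht 0) _ (ht 1)
  obtain ⟨q, hqS⟩ := hS _ (ht 2) _ (ht 0)
  -- The centre is where `q`, from `t 2`, first meets a path from `t 0` to `t 1`.
  set P := p.bypass
  have hP : P.IsPath := p.bypass_isPath
  have hPS : ∀ z ∈ P.support, z ∈ S := fun z hz => hpS z (p.support_bypass_subset_support hz)
  obtain ⟨c, hc, q', hq'q, hq'P⟩ :=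
    exists_walk_to_first_mem q (T := {z | z ∈ P.support}) P.start_mem_support
  have hc : c ∈ P.support := hc
  have hP' := (P.take_spec hc).symm ▸ hP
  refine ⟨c, hPS c hc, ![⟨_, (P.takeUntil c hc).reverse⟩, ⟨_, P.dropUntil c hc⟩,
    ⟨_, q'.bypass.reverse⟩], ⟨?_, ?_, ?_⟩, by simp [Fin.forall_fin_succ]⟩
  · simp only [Fin.forall_fin_succ, Fin.forall_fin_zero]
    exact ⟨(hP.takeUntil hc).reverse, hP.dropUntil hc, q'.bypass_isPath.reverse, trivial⟩
  · simp only [Fin.forall_fin_succ, Fin.forall_fin_zero]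
    refine ⟨?_, fun z hz => hPS z (P.support_dropUntil_subset_support hc hz), ?_, trivial⟩
    · simpa using fun z hz => hPS z (P.support_takeUntil_subset_support hc hz)
    · simpa using fun z hz => hqS z (hq'q z (q'.support_bypass_subset_support hz))
  · have h12 : ∀ z ∈ (P.takeUntil c hc).support, z ∈ (P.dropUntil c hc).support → z = c :=
      fun z h₁ h₂ => by_contra fun hzc => hP'.ne_of_mem_support_of_append hzc h₁ h₂ rfl
    have h3 : ∀ z ∈ q'.bypass.support, z ∈ P.support → z = c :=
      fun z hz => hq'P z (q'.support_bypass_subset_support hz)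
    intro j k hjk z hj hk
    fin_cases j <;> fin_cases k <;> simp at hjk hj hk
    all_goals first
      | exact h12 z hj hk | exact h12 z hk hj
      | exact h3 z hk (P.support_takeUntil_subset_support hc hj)
      | exact h3 z hj (P.support_takeUntil_subset_support hc hk)
      | exact h3 z hk (P.support_dropUntil_subset_support hc hj)
      | exact h3 z hj (P.support_dropUntil_subset_support hc hk)

lemma exists_spider {ι : Type*} {S : Set V} (hS : PreconnectedOn G S) (t : ι → V)
    (ht : ∀ j, t j ∈ S) {e : Fin 3 → ι} (he : Surjective e) :
    ∃ c ∈ S, ∃ arm : ι → Σ' y, G.Walk c y,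
      IsSpider G S c arm ∧ ∀ j, (arm j).1 = t j := by
  obtain ⟨c, hc, arm, harm, hend⟩ := exists_spider_fin_three hS (t ∘ e) (fun k => ht (e k))
  refine ⟨c, hc, arm ∘ surjInv he, harm.comp (injective_surjInv he), fun j => ?_⟩
  simp [hend, surjInv_eq he]

def HasK4Minor (G : SimpleGraph V) : Prop :=
  ∃ S : Fin 4 → Set V, Pairwise (Disjoint on S) ∧ (∀ i, PreconnectedOn G (S i)) ∧
    ∀ i j, i ≠ j → ∃ x ∈ S i, ∃ y ∈ S j, G.Adj x y

lemma exists_attachments {S : Fin 4 → Set V}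
    (h : ∀ i j, i ≠ j → ∃ x ∈ S i, ∃ y ∈ S j, G.Adj x y) :
    ∃ att : Fin 4 → Fin 4 → V,
      ∀ i j, i ≠ j → att i j ∈ S i ∧ G.Adj (att i j) (att j i) := by
  obtain ⟨v₀, -⟩ := h 0 1 (by decide)
  have : ∀ i j : Fin 4, ∃ p : V × V,
      i < j → p.1 ∈ S i ∧ p.2 ∈ S j ∧ G.Adj p.1 p.2 := by
    intro i j
    by_cases hij : i < j
    · obtain ⟨x, hx, y, hy, hxy⟩ := h i j hij.ne
      exact ⟨(x, y), fun _ => ⟨hx, hy, hxy⟩⟩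
    · exact ⟨(v₀, v₀), fun h => absurd h hij⟩
  choose p hp using this
  refine ⟨fun i j => if i < j then (p i j).1 else (p j i).2, fun i j hij => ?_⟩
  rcases hij.lt_or_gt with hij | hij
  · obtain ⟨h₁, -, h₃⟩ := hp i j hij
    simpa [hij, hij.not_gt] using ⟨h₁, h₃⟩
  · obtain ⟨-, h₂, h₃⟩ := hp j i hij
    simpa [hij, hij.not_gt] using ⟨h₂, h₃.symm⟩

lemma hasK4Subdivision_of_isSpider {S : Fin 4 → Set V} (hdisj : Pairwise (Disjoint on S))
    {c : Fin 4 → V} (hc : ∀ i, c i ∈ S i)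
    {arm : ∀ i, {j // j ≠ i} → Σ' y, G.Walk (c i) y}
    (harm : ∀ i, IsSpider G (S i) (c i) (arm i))
    (hedge : ∀ i j (h : i ≠ j), G.Adj (arm i ⟨j, h.symm⟩).1 (arm j ⟨i, h⟩).1) :
    HasK4Subdivision G := by
  have hS : ∀ {i k z}, z ∈ S i → z ∈ S k → i = k := fun hi hk =>
    by_contra fun hik => (hdisj hik : Disjoint (S _) (S _)).ne_of_mem hi hk rfl
  have harmS : ∀ i j z, z ∈ (arm i j).2.support → z ∈ S i :=
    fun i j => (harm i).support_subset j
  let q (i j : Fin 4) (h : i ≠ j) : G.Walk (c i) (c j) :=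
    (arm i ⟨j, h.symm⟩).2.append (.cons (hedge i j h) (arm j ⟨i, h⟩).2.reverse)
  let p (i j : Fin 4) : Σ' x y, G.Walk x y :=
    if h : i = j then ⟨c i, c i, .nil⟩ else ⟨c i, c j, q i j h⟩
  have hp : ∀ i j (h : i ≠ j), p i j = ⟨c i, c j, q i j h⟩ := fun i j h => dif_neg h
  refine ⟨c, p, fun i k hik => hS (hc i) (hik ▸ hc k),
    fun i j h => by rw [hp i j h]; exact ⟨rfl, rfl⟩, fun i j h => ?_,
    fun i j h k hk => ?_, fun i j i' j' h h' hne z hz hz' => ?_⟩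
  · rw [hp i j h]
    exact isPath_append_cons_reverse ((harm i).isPath _) ((harm j).isPath _) _
      fun z hi hj => h (hS (harmS _ _ z hi) (harmS _ _ z hj))
  · rw [hp i j h] at hk
    exact (mem_support_append_cons_reverse hk).imp (fun hk => hS (hc k) (harmS _ _ _ hk))
      (fun hk => hS (hc k) (harmS _ _ _ hk))
  · rw [hp i j h] at hz
    rw [hp i' j' h'] at hz'
    have key : ∀ k l k' l' (hl : l ≠ k) (hl' : l' ≠ k'), (k, l) ≠ (k', l') →
        z ∈ (arm k ⟨l, hl⟩).2.support → z ∈ (arm k' ⟨l', hl'⟩).2.support →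
          z ∈ Set.range c := by
      intro k l k' l' hl hl' hkl hk hk'
      obtain rfl := hS (harmS _ _ _ hk) (harmS _ _ _ hk')
      exact ⟨k, ((harm k).eq_of_mem _ _ (fun h => hkl (by simp_all)) z hk hk').symm⟩
    rcases mem_support_append_cons_reverse hz with hz | hz <;>
      rcases mem_support_append_cons_reverse hz' with hz' | hz' <;>
      refine key _ _ _ _ _ _ ?_ hz hz' <;> rintro ⟨⟩
    exacts [hne rfl, hne (Set.pair_comm _ _), hne (Set.pair_comm _ _), hne rfl]

theorem HasK4Minor.hasK4Subdivision (h : HasK4Minor G) : HasK4Subdivision G := by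
  obtain ⟨S, hdisj, hconn, hadj⟩ := h
  obtain ⟨att, hatt⟩ := exists_attachments hadj
  have hcover : ∀ i : Fin 4, ∃ e : Fin 3 → {j // j ≠ i}, Surjective e := by decide
  choose e he using hcover
  choose c hc arm harm hend using fun i => exists_spider (hconn i)
    (fun j : {j // j ≠ i} => att i j) (fun j => (hatt i j (Ne.symm j.2)).1) (he i)
  refine hasK4Subdivision_of_isSpider hdisj hc harm fun i j h => ?_
  rw [hend, hend]
  exact (hatt i j h).2

/-- `π` sends each vertex of `G` to the vertex of `H` whose branch set contains it. Minors stay on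
the vertex type of `G`: deleted vertices survive as isolated vertices of `H`. -/
structure IsMinorMap (π : V → V) (H G : SimpleGraph V) : Prop where
  preconnectedOn_fiber : ∀ a, PreconnectedOn G (π ⁻¹' {a})
  exists_adj : ∀ ⦃a b⦄, H.Adj a b → ∃ x y, π x = a ∧ π y = b ∧ G.Adj x y

def IsMinor (H G : SimpleGraph V) : Prop := ∃ π, IsMinorMap π H G

lemma IsMinorMap.exists_walk {π : V → V} (h : IsMinorMap π H G) {a b : V} (w : H.Walk a b) :
    ∀ {x y : V}, π x = a → π y = b →
      ∃ w' : G.Walk x y, ∀ z ∈ w'.support, π z ∈ w.support := by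
  induction w with
  | nil =>
    intro x y hx hy
    obtain ⟨w', hw'⟩ := h.preconnectedOn_fiber _ x hx y hy
    exact ⟨w', fun z hz => by simpa using hw' z hz⟩
  | cons hab t ih =>
    intro x y hx hy
    obtain ⟨x', y', hx', hy', hxy'⟩ := h.exists_adj hab
    obtain ⟨f, hf⟩ := h.preconnectedOn_fiber _ x hx x' hx'
    obtain ⟨t', ht'⟩ := ih hy' hy
    refine ⟨f.append (.cons hxy' t'), fun z hz => ?_⟩
    simp only [Walk.mem_support_append_iff, Walk.support_cons, List.mem_cons] at hz
    rcases hz with hz | rfl | hz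
    · simp [show π z = _ from hf z hz]
    · simp [hx']
    · exact List.mem_cons_of_mem _ (ht' z hz)

lemma IsMinor.of_le (h : H ≤ G) : IsMinor H G := by
  refine ⟨id, fun a x hx y hy => ?_, fun a b hab => ⟨a, b, rfl, rfl, h hab⟩⟩
  obtain rfl : x = y := hx.trans hy.symm
  exact ⟨.nil, by simpa using hx⟩

lemma IsMinor.trans (hHK : IsMinor H K) (hKG : IsMinor K G) : IsMinor H G := by
  obtain ⟨π₁, h₁⟩ := hHK
  obtain ⟨π₂, h₂⟩ := hKG
  refine ⟨π₁ ∘ π₂, fun a x hx y hy => ?_, fun a b hab => ?_⟩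
  · obtain ⟨w, hw⟩ := h₁.preconnectedOn_fiber a _ hx _ hy
    obtain ⟨w', hw'⟩ := h₂.exists_walk w rfl rfl
    exact ⟨w', fun z hz => hw _ (hw' z hz)⟩
  · obtain ⟨a', b', rfl, rfl, hab'⟩ := h₁.exists_adj hab
    obtain ⟨x, y, rfl, rfl, hxy⟩ := h₂.exists_adj hab'
    exact ⟨x, y, rfl, rfl, hxy⟩

lemma HasK4Minor.of_isMinor (hHG : IsMinor H G) (h : HasK4Minor H) : HasK4Minor G := by
  obtain ⟨π, hπ⟩ := hHG
  obtain ⟨S, hdisj, hconn, hadj⟩ := h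
  refine ⟨fun i => π ⁻¹' S i, fun i j hij => (hdisj hij).preimage π, fun i x hx y hy => ?_,
    fun i j hij => ?_⟩
  · obtain ⟨w, hw⟩ := hconn i _ hx _ hy
    obtain ⟨w', hw'⟩ := hπ.exists_walk w rfl rfl
    exact ⟨w', fun z hz => hw _ (hw' z hz)⟩
  · obtain ⟨a, ha, b, hb, hab⟩ := hadj i j hij
    obtain ⟨x, y, rfl, rfl, hxy⟩ := hπ.exists_adj hab
    exact ⟨x, ha, y, hb, hxy⟩

lemma IsMinorMap.ncard_edgeSet_lt [Finite V] {π : V → V} (h : IsMinorMap π H G) {a b : V}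
    (hab : G.Adj a b) (hπ : π a = π b) : H.edgeSet.ncard < G.edgeSet.ncard := by
  have hsub : H.edgeSet ⊆ Sym2.map π '' G.edgeSet \ {s(π a, π a)} := by
    refine Sym2.ind (fun u v huv => ⟨?_, ?_⟩)
    · obtain ⟨x, y, rfl, rfl, hxy⟩ := h.exists_adj huv
      exact ⟨s(x, y), hxy, rfl⟩
    · simp only [Set.mem_singleton_iff, Sym2.eq_iff, or_self]
      exact fun ⟨hu, hv⟩ => H.ne_of_adj huv (hu.trans hv.symm)
  calc H.edgeSet.ncard ≤ (Sym2.map π '' G.edgeSet \ {s(π a, π a)}).ncard :=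
        Set.ncard_le_ncard hsub
    _ < (Sym2.map π '' G.edgeSet).ncard :=
      Set.ncard_sdiff_singleton_lt_of_mem ⟨s(a, b), hab, by simp [hπ]⟩
    _ ≤ G.edgeSet.ncard := Set.ncard_image_le

/-- Contraction of the edge `vx` onto `x`; `v` stays behind as an isolated vertex. -/
def contractEdge (G : SimpleGraph V) (v x : V) : SimpleGraph V :=
  fromRel fun a b => a ≠ v ∧ b ≠ v ∧ (G.Adj a b ∨ a = x ∧ G.Adj v b)

variable {v x y z a b c u w : V}

lemma isMinorMap_contractEdge [DecidableEq V] (hvx : G.Adj v x) :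
    IsMinorMap (fun a => if a = v then x else a) (contractEdge G v x) G := by
  refine ⟨fun c a ha b hb => ?_, fun a b hab => ?_⟩
  · simp only [Set.mem_preimage, Set.mem_singleton_iff] at ha hb
    subst hb
    by_cases hab : a = b
    · subst hab
      exact ⟨.nil, by simp⟩
    have hadj : G.Adj a b := by
      split_ifs at ha <;> subst_vars
      exacts [absurd rfl hab, hvx, hvx.symm, absurd rfl hab]
    exact ⟨.cons hadj .nil, by simp [ha]⟩
  · have hlift : ∀ a b, a ≠ v → b ≠ v → (G.Adj a b ∨ a = x ∧ G.Adj v b) →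
        ∃ a' b', (if a' = v then x else a') = a ∧ (if b' = v then x else b') = b ∧
          G.Adj a' b' := by
      rintro a b ha hb (hab | ⟨rfl, hvb⟩)
      exacts [⟨a, b, if_neg ha, if_neg hb, hab⟩, ⟨v, b, if_pos rfl, if_neg hb, hvb⟩]
    obtain ⟨-, ⟨ha, hb, hab⟩ | ⟨hb, ha, hba⟩⟩ := (fromRel_adj _ _ _).mp hab
    · exact hlift a b ha hb hab
    · obtain ⟨b', a', hb', ha', hba'⟩ := hlift b a hb ha hba
      exact ⟨a', b', ha', hb', hba'.symm⟩

lemma not_contractEdge_adj_left : ¬ (contractEdge G v x).Adj v y := by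
  simp [contractEdge]

lemma contractEdge_adj_of_adj (hzv : z ≠ v) (hyv : y ≠ v) (h : G.Adj z y) :
    (contractEdge G v x).Adj z y :=
  (fromRel_adj _ _ _).mpr ⟨h.ne, .inl ⟨hzv, hyv, .inl h⟩⟩

lemma contractEdge_adj_of_adj_of_adj (hvx : G.Adj v x) (hvy : G.Adj v y) (hxy : x ≠ y) :
    (contractEdge G v x).Adj x y :=
  (fromRel_adj _ _ _).mpr ⟨hxy, .inl ⟨hvx.ne', hvy.ne', .inr ⟨rfl, hvy⟩⟩⟩

lemma adj_of_contractEdge_adj (hzx : z ≠ x) (hvz : ¬ G.Adj v z)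
    (h : (contractEdge G v x).Adj z y) : G.Adj z y := by
  obtain ⟨-, ⟨-, -, h | ⟨rfl, -⟩⟩ | ⟨-, -, h | ⟨-, h⟩⟩⟩ :=
    (fromRel_adj _ _ _).mp h
  exacts [h, absurd rfl hzx, h.symm, absurd h hvz]

def IsolatedOrHighDegree (G : SimpleGraph V) (z : V) : Prop :=
  (G.neighborSet z).ncard = 0 ∨ 3 ≤ (G.neighborSet z).ncard

lemma IsolatedOrHighDegree.three_le [Finite V] (h : IsolatedOrHighDegree G z) (hzy : G.Adj z y) :
    3 ≤ (G.neighborSet z).ncard :=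
  h.resolve_left (Set.ncard_ne_zero_of_mem hzy)

/-- Only common neighbours of `v` and `x` lose a neighbour; `x` keeps its degree by gaining `y`. -/
lemma isolatedOrHighDegree_contractEdge [Finite V] (hG : ∀ z ≠ v, IsolatedOrHighDegree G z)
    (hvx : G.Adj v x) (hvy : G.Adj v y) (hxy : ¬ G.Adj x y) (hyx : y ≠ x)
    (hcommon : ∀ z, G.Adj v z → G.Adj x z → 4 ≤ (G.neighborSet z).ncard) (z : V) :
    IsolatedOrHighDegree (contractEdge G v x) z := by
  rcases eq_or_ne z v with rfl | hzv
  · exact .inl ((Set.ncard_eq_zero (Set.toFinite _)).mpr (Set.eq_empty_of_forall_notMem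
      fun _ => not_contractEdge_adj_left))
  have hsub : G.neighborSet z \ {v} ⊆ (contractEdge G v x).neighborSet z :=
    fun y ⟨hy, hyv⟩ => contractEdge_adj_of_adj hzv hyv hy
  by_cases hvz : G.Adj v z
  swap
  · have hzx : z ≠ x := by rintro rfl; exact hvz hvx
    have hN : (contractEdge G v x).neighborSet z = G.neighborSet z :=
      Set.Subset.antisymm (fun y hy => adj_of_contractEdge_adj hzx hvz hy)
        (by rwa [Set.sdiff_singleton_eq_self fun h : v ∈ G.neighborSet z => hvz h.symm] at hsub)
    rw [IsolatedOrHighDegree, hN]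
    exact hG z hzv
  right
  rcases eq_or_ne z x with rfl | hzx
  · calc 3 ≤ (G.neighborSet z).ncard := (hG z hzv).three_le hvz.symm
      _ ≤ _ := ncard_le_ncard_of_insert_sdiff_subset hvz.symm hxy
        (Set.insert_subset (contractEdge_adj_of_adj_of_adj hvz hvy hyx.symm) hsub)
  by_cases hxz : G.Adj x z
  · have := hcommon z hvz hxz
    have := Set.pred_ncard_le_ncard_sdiff_singleton (G.neighborSet z) v
    have := Set.ncard_le_ncard hsub
    omega
  · calc 3 ≤ (G.neighborSet z).ncard := (hG z hzv).three_le hvz.symm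
      _ ≤ _ := ncard_le_ncard_of_insert_sdiff_subset hvz.symm (fun h => hxz h.symm)
        (Set.insert_subset (contractEdge_adj_of_adj_of_adj hvx hvz hzx.symm).symm hsub)

def IsReduction (H G : SimpleGraph V) : Prop :=
  IsMinor H G ∧ H.edgeSet.ncard < G.edgeSet.ncard ∧ H.edgeSet.Nonempty ∧
    ∀ z, IsolatedOrHighDegree H z

lemma IsReduction.trans_le [Finite V] (h : IsReduction H K) (hKG : K ≤ G) : IsReduction H G :=
  ⟨h.1.trans (.of_le hKG), h.2.1.trans_le (Set.ncard_le_ncard (edgeSet_mono hKG)), h.2.2⟩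

lemma isReduction_contractEdge [Finite V] (hG : ∀ z ≠ v, IsolatedOrHighDegree G z)
    (hvx : G.Adj v x) (hvy : G.Adj v y) (hxy : ¬ G.Adj x y) (hyx : y ≠ x)
    (hcommon : ∀ z, G.Adj v z → G.Adj x z → 4 ≤ (G.neighborSet z).ncard) :
    IsReduction (contractEdge G v x) G := by
  classical
  have hπ := isMinorMap_contractEdge hvx
  exact ⟨⟨_, hπ⟩, hπ.ncard_edgeSet_lt hvx (by simp),
    ⟨s(x, y), contractEdge_adj_of_adj_of_adj hvx hvy hyx.symm⟩,
    isolatedOrHighDegree_contractEdge hG hvx hvy hxy hyx hcommon⟩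

lemma isReduction_deleteEdges [Finite V] (hG : ∀ z, IsolatedOrHighDegree G z) (huw : G.Adj u w)
    (hu : 4 ≤ (G.neighborSet u).ncard) (hw : 4 ≤ (G.neighborSet w).ncard) :
    IsReduction (G.deleteEdges {s(u, w)}) G := by
  refine ⟨.of_le (G.deleteEdges_le _), ?_, ?_, fun z => ?_⟩
  · rw [edgeSet_deleteEdges]
    exact Set.ncard_sdiff_singleton_lt_of_mem huw
  · obtain ⟨y, hy, hyw⟩ :=
      Set.exists_ne_of_one_lt_ncard (by omega : 1 < (G.neighborSet u).ncard) w
    exact ⟨s(u, y), by simpa [hyw, huw.ne] using hy⟩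
  by_cases hz : z = u ∨ z = w
  · obtain ⟨t, h4, ht⟩ :
        ∃ t, 4 ≤ (G.neighborSet z).ncard ∧ ∀ y, s(z, y) = s(u, w) → y = t := by
      rcases hz with rfl | rfl
      exacts [⟨w, hu, by simp +contextual [huw.ne]⟩, ⟨u, hw, by simp +contextual [huw.ne']⟩]
    have hsub : G.neighborSet z \ {t} ⊆ (G.deleteEdges {s(u, w)}).neighborSet z :=
      fun y ⟨hy, hyt⟩ => (deleteEdges_adj ..).mpr ⟨hy, fun h => hyt (ht y h)⟩
    have := Set.pred_ncard_le_ncard_sdiff_singleton (G.neighborSet z) t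
    have := Set.ncard_le_ncard hsub
    exact .inr (by omega)
  · have hN : (G.deleteEdges {s(u, w)}).neighborSet z = G.neighborSet z := by
      ext y
      simp only [mem_neighborSet, deleteEdges_adj, Set.mem_singleton_iff, Sym2.eq_iff]
      tauto
    rw [IsolatedOrHighDegree, hN]
    exact hG z

lemma isolatedOrHighDegree_deleteIncidenceSet [Finite V] (hG : ∀ z, IsolatedOrHighDegree G z)
    (hb : ∀ z, G.Adj b z → z ≠ v → 4 ≤ (G.neighborSet z).ncard) (hzv : z ≠ v) :
    IsolatedOrHighDegree (G.deleteIncidenceSet b) z := by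
  by_cases hzb : z = b
  · exact .inl ((Set.ncard_eq_zero (Set.toFinite _)).mpr (Set.eq_empty_of_forall_notMem
      fun y hy => (deleteIncidenceSet_adj.mp hy).2.1 hzb))
  have hN : (G.deleteIncidenceSet b).neighborSet z = G.neighborSet z \ {b} := by
    ext y
    simp [deleteIncidenceSet_adj, hzb]
  rw [IsolatedOrHighDegree, hN]
  by_cases hbz : G.Adj b z
  · have := hb z hbz hzv
    have := Set.pred_ncard_le_ncard_sdiff_singleton (G.neighborSet z) b
    exact .inr (by omega)
  · rw [Set.sdiff_singleton_eq_self (fun h => hbz h.symm)]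
    exact hG z

lemma neighborSet_eq_of_ncard_eq_three [Finite V] (h : (G.neighborSet v).ncard = 3)
    (ha : G.Adj v a) (hb : G.Adj v b) (hc : G.Adj v c)
    (hab : a ≠ b) (hac : a ≠ c) (hbc : b ≠ c) :
    G.neighborSet v = {a, b, c} :=
  (Set.eq_of_subset_of_ncard_le (by simp [Set.insert_subset_iff, ha, hb, hc])
    (by rw [h, Set.ncard_eq_three.mpr ⟨a, b, c, hab, hac, hbc, rfl⟩])).symm

lemma adj_iff_of_neighborSet_eq (hN : G.neighborSet v = {a, b, c}) (z : V) :
    G.Adj v z ↔ z = a ∨ z = b ∨ z = c := by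
  simpa using Set.ext_iff.mp hN z

lemma isReduction_contractEdge_of_neighborSet_eq [Finite V] (hG : ∀ z, IsolatedOrHighDegree G z)
    (hN : G.neighborSet v = {a, b, c}) (hab : a ≠ b) (hab' : ¬ G.Adj a b) (hac' : ¬ G.Adj a c) :
    IsReduction (contractEdge G v a) G := by
  have hv := adj_iff_of_neighborSet_eq hN
  refine isReduction_contractEdge (fun z _ => hG z) ((hv a).mpr (.inl rfl))
    ((hv b).mpr (.inr (.inl rfl))) hab' hab.symm fun z hvz haz => ?_
  rcases (hv z).mp hvz with rfl | rfl | rfl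
  exacts [(G.irrefl haz).elim, (hab' haz).elim, (hac' haz).elim]

lemma exists_isReduction_of_diamond_of_ncard_eq_three [Finite V]
    (hG : ∀ z, IsolatedOrHighDegree G z) (hNv : G.neighborSet v = {a, b, c})
    (hNb : G.neighborSet b = {v, a, c}) (hac : ¬ G.Adj a c) (ha : (G.neighborSet a).ncard = 3) :
    ∃ H : SimpleGraph V, IsReduction H G := by
  have hv := adj_iff_of_neighborSet_eq hNv
  have hb := adj_iff_of_neighborSet_eq hNb
  have hav : G.Adj a v := ((hv a).mpr (.inl rfl)).symm
  have hab : G.Adj a b := ((hb a).mpr (.inr (.inl rfl))).symm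
  have hvb : v ≠ b := ((hb v).mpr (.inl rfl)).ne'
  obtain ⟨w, haw, hw⟩ := Set.exists_mem_notMem_of_ncard_lt_ncard
    (s := {v, b}) (t := G.neighborSet a) (by rw [ha, Set.ncard_pair hvb]; omega)
  simp only [Set.mem_insert_iff, Set.mem_singleton_iff, not_or] at hw
  have haw : G.Adj a w := haw
  have hNa := neighborSet_eq_of_ncard_eq_three ha haw hav hab hw.1 hw.2 hvb
  refine ⟨_, isReduction_contractEdge_of_neighborSet_eq hG hNa hw.1 (fun h => ?_) (fun h => ?_)⟩
  · rcases (hv w).mp h.symm with rfl | rfl | rfl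
    exacts [G.irrefl haw, hw.2 rfl, hac haw]
  · rcases (hb w).mp h.symm with rfl | rfl | rfl
    exacts [hw.1 rfl, G.irrefl haw, hac haw]

/-- `v` and `b` span a diamond with tips `a` and `c`; isolating `b` and contracting `va` replaces it
by the edge `ac`. -/
lemma isReduction_of_diamond [Finite V] (hG : ∀ z, IsolatedOrHighDegree G z)
    (hNv : G.neighborSet v = {a, b, c}) (hNb : G.neighborSet b = {v, a, c}) (hac : ¬ G.Adj a c)
    (hac' : a ≠ c) (ha : 4 ≤ (G.neighborSet a).ncard) (hc : 4 ≤ (G.neighborSet c).ncard) :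
    IsReduction (contractEdge (G.deleteIncidenceSet b) v a) G := by
  have hv := adj_iff_of_neighborSet_eq hNv
  have hb := adj_iff_of_neighborSet_eq hNb
  have hva := (hv a).mpr (.inl rfl)
  have hvc := (hv c).mpr (.inr (.inr rfl))
  have hvb := (hb v).mpr (.inl rfl)
  have hab := ((hb a).mpr (.inr (.inl rfl))).ne'
  have hcb := ((hb c).mpr (.inr (.inr rfl))).ne'
  have hG' : ∀ z ≠ v, IsolatedOrHighDegree (G.deleteIncidenceSet b) z :=
    fun z => isolatedOrHighDegree_deleteIncidenceSet hG fun z hbz hzv => by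
      rcases (hb z).mp hbz with rfl | rfl | rfl
      exacts [absurd rfl hzv, ha, hc]
  refine (isReduction_contractEdge hG' (deleteIncidenceSet_adj.mpr ⟨hva, hvb.ne', hab⟩)
    (deleteIncidenceSet_adj.mpr ⟨hvc, hvb.ne', hcb⟩)
    (fun h => hac (deleteIncidenceSet_adj.mp h).1) hac'.symm fun z hvz haz => ?_).trans_le
    (G.deleteIncidenceSet_le b)
  obtain ⟨hvz, -, hzb⟩ := deleteIncidenceSet_adj.mp hvz
  obtain ⟨haz, -⟩ := deleteIncidenceSet_adj.mp haz
  rcases (hv z).mp hvz with rfl | rfl | rfl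
  exacts [(G.irrefl haz).elim, (hzb rfl).elim, (hac haz).elim]

lemma exists_isReduction_of_diamond [Finite V] (hG : ∀ z, IsolatedOrHighDegree G z)
    (hNv : G.neighborSet v = {a, b, c}) (hNb : G.neighborSet b = {v, a, c}) (hac : ¬ G.Adj a c)
    (hac' : a ≠ c) : ∃ H : SimpleGraph V, IsReduction H G := by
  by_cases ha : (G.neighborSet a).ncard = 3
  · exact exists_isReduction_of_diamond_of_ncard_eq_three hG hNv hNb hac ha
  by_cases hc : (G.neighborSet c).ncard = 3
  · refine exists_isReduction_of_diamond_of_ncard_eq_three hG (hNv.trans ?_) (hNb.trans ?_)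
      (fun h => hac h.symm) hc <;>
    · ext
      simp only [Set.mem_insert_iff, Set.mem_singleton_iff]
      tauto
  have hva : G.Adj v a := by simp [← mem_neighborSet, hNv]
  have hvc : G.Adj v c := by simp [← mem_neighborSet, hNv]
  have := (hG a).three_le hva.symm
  have := (hG c).three_le hvc.symm
  exact ⟨_, isReduction_of_diamond hG hNv hNb hac hac' (by omega) (by omega)⟩

lemma exists_isReduction_of_path [Finite V] (hG : ∀ z, IsolatedOrHighDegree G z)
    (hN : G.neighborSet v = {a, b, c}) (hab : G.Adj a b) (hbc : G.Adj b c) (hac : ¬ G.Adj a c)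
    (hac' : a ≠ c) : ∃ H : SimpleGraph V, IsReduction H G := by
  have hv := adj_iff_of_neighborSet_eq hN
  have hva := (hv a).mpr (.inl rfl)
  have hvb := (hv b).mpr (.inr (.inl rfl))
  have hvc := (hv c).mpr (.inr (.inr rfl))
  by_cases hb : (G.neighborSet b).ncard = 3
  · exact exists_isReduction_of_diamond hG hN (neighborSet_eq_of_ncard_eq_three hb hvb.symm
      hab.symm hbc hva.ne hvc.ne hac') hac hac'
  refine ⟨_, isReduction_contractEdge (fun z _ => hG z) hva hvc hac hac'.symm
    fun z hvz haz => ?_⟩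
  rcases (hv z).mp hvz with rfl | rfl | rfl
  · exact (G.irrefl haz).elim
  · have := (hG z).three_le hbc
    omega
  · exact (hac haz).elim

lemma hasK4Minor_of_adj (f : Fin 4 → V) (hf : ∀ i j, i ≠ j → G.Adj (f i) (f j)) :
    HasK4Minor G := by
  refine ⟨fun i => {f i}, fun i j hij => Set.disjoint_singleton.mpr (hf i j hij).ne,
    fun i x hx y hy => ?_, fun i j hij => ⟨f i, rfl, f j, rfl, hf i j hij⟩⟩
  obtain rfl : x = f i := hx
  obtain rfl : y = f i := hy
  exact ⟨.nil, by simp⟩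

lemma hasK4Minor_or_exists_isReduction_of_neighborSet_eq [Finite V]
    (hG : ∀ z, IsolatedOrHighDegree G z) (hN : G.neighborSet v = {a, b, c})
    (hab : a ≠ b) (hac : a ≠ c) (hbc : b ≠ c) :
    HasK4Minor G ∨ ∃ H : SimpleGraph V, IsReduction H G := by
  have hN' : ∀ {x y z : V}, ({x, y, z} : Set V) = {a, b, c} → G.neighborSet v = {x, y, z} :=
    fun h => hN.trans h.symm
  by_cases h₁ : G.Adj a b <;> by_cases h₂ : G.Adj b c <;> by_cases h₃ : G.Adj a c
  · left
    have hv := adj_iff_of_neighborSet_eq hN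
    refine hasK4Minor_of_adj ![v, a, b, c] fun i j hij => ?_
    fin_cases i <;> fin_cases j <;> simp_all [G.adj_comm]
  · exact .inr (exists_isReduction_of_path hG hN h₁ h₂ h₃ hac)
  · exact .inr
      (exists_isReduction_of_path hG (hN' (Set.insert_comm _ _ _)) h₁.symm h₃ h₂ hbc)
  · exact .inr ⟨_, isReduction_contractEdge_of_neighborSet_eq hG
      (hN' (by rw [Set.insert_comm, Set.pair_comm, Set.insert_comm])) hac.symm
      (fun h => h₃ h.symm) (fun h => h₂ h.symm)⟩
  · exact .inr
      (exists_isReduction_of_path hG (hN' (by rw [Set.pair_comm])) h₃ h₂.symm h₁ hab)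
  · exact .inr ⟨_, isReduction_contractEdge_of_neighborSet_eq hG hN hab h₁ h₃⟩
  · exact .inr ⟨_, isReduction_contractEdge_of_neighborSet_eq hG (hN' (Set.insert_comm _ _ _))
      hab.symm (fun h => h₁ h.symm) h₂⟩
  · exact .inr ⟨_, isReduction_contractEdge_of_neighborSet_eq hG hN hab h₁ h₃⟩

lemma hasK4Minor_or_exists_isReduction [Finite V] (hE : G.edgeSet.Nonempty)
    (hG : ∀ z, IsolatedOrHighDegree G z) :
    HasK4Minor G ∨ ∃ H : SimpleGraph V, IsReduction H G := by
  obtain ⟨e, he⟩ := hE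
  induction e using Sym2.ind with | _ u w => ?_
  have huw : G.Adj u w := he
  have hdeg3 : ∀ z, (G.neighborSet z).ncard = 3 →
      HasK4Minor G ∨ ∃ H : SimpleGraph V, IsReduction H G := by
    intro z hz
    obtain ⟨a, b, c, hab, hac, hbc, hN⟩ := Set.ncard_eq_three.mp hz
    exact hasK4Minor_or_exists_isReduction_of_neighborSet_eq hG hN hab hac hbc
  by_cases hu : (G.neighborSet u).ncard = 3
  · exact hdeg3 u hu
  by_cases hw : (G.neighborSet w).ncard = 3
  · exact hdeg3 w hw
  have := (hG u).three_le huw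
  have := (hG w).three_le huw.symm
  exact .inr ⟨_, isReduction_deleteEdges hG huw (by omega) (by omega)⟩

theorem hasK4Minor_of_isolatedOrHighDegree [Finite V] (hE : G.edgeSet.Nonempty)
    (hG : ∀ z, IsolatedOrHighDegree G z) : HasK4Minor G := by
  induction hn : G.edgeSet.ncard using Nat.strong_induction_on generalizing G with
  | _ n ih =>
    obtain h | ⟨H, hHG, hlt, hHE, hH⟩ := hasK4Minor_or_exists_isReduction hE hG
    exacts [h, (ih _ (hn ▸ hlt) hHE hH rfl).of_isMinor hHG]

lemma exists_ne_ne_of_two_le_ncard_edgeSet (h : 2 ≤ G.edgeSet.ncard) (a b : V) :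
    ∃ c, c ≠ a ∧ c ≠ b := by
  by_contra! hab
  have hsub : G.edgeSet ⊆ {s(a, b)} := by
    refine Sym2.ind fun x y hxy => ?_
    have hxy : G.Adj x y := hxy
    have hab' : ∀ c, c = a ∨ c = b := fun c => or_iff_not_imp_left.mpr (hab c)
    rcases hab' x with rfl | rfl <;> rcases hab' y with rfl | rfl <;> simp_all [Sym2.eq_swap]
  have := Set.ncard_le_ncard hsub (Set.finite_singleton _)
  rw [Set.ncard_singleton] at this
  omega

lemma exists_adj_ne_of_connected_deleteVerts
    (h : ((⊤ : G.Subgraph).deleteVerts {u}).coe.Connected) (hv : v ≠ u) (hw : w ≠ u)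
    (hvw : v ≠ w) : ∃ z, G.Adj v z ∧ z ≠ u := by
  obtain ⟨p⟩ := h.preconnected ⟨v, by simpa using hv⟩ ⟨w, by simpa using hw⟩
  have hp := p.adj_snd (p.not_nil_of_ne (by simpa using hvw))
  exact ⟨_, Subgraph.coe_adj_sub _ _ _ hp, by simpa using (p.snd).2⟩

lemma two_le_ncard_neighborSet [Finite V]
    (h : ∀ u, ((⊤ : G.Subgraph).deleteVerts {u}).coe.Connected)
    (hthird : ∀ a b : V, ∃ c, c ≠ a ∧ c ≠ b) (v : V) : 2 ≤ (G.neighborSet v).ncard := by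
  obtain ⟨u, hu, -⟩ := hthird v v
  obtain ⟨w, hwu, hwv⟩ := hthird u v
  obtain ⟨x, hvx, -⟩ := exists_adj_ne_of_connected_deleteVerts (h u) hu.symm hwu hwv.symm
  obtain ⟨w', hw'x, hw'v⟩ := hthird x v
  obtain ⟨y, hvy, hyx⟩ := exists_adj_ne_of_connected_deleteVerts (h x) hvx.ne hw'x hw'v.symm
  calc 2 = ({x, y} : Set V).ncard := (Set.ncard_pair hyx.symm).symm
    _ ≤ _ := Set.ncard_le_ncard (Set.pair_subset hvx hvy)

lemma ncard_neighborSet_eq_degree [Fintype V] [DecidableRel G.Adj] (v : V) :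
    (G.neighborSet v).ncard = G.degree v := by
  rw [← Nat.card_coe_set_eq, Nat.card_eq_fintype_card, card_neighborSet_eq_degree]

end

theorem seriesParallel_graph_has_degree_two_vertex_general {V : Type*} [Fintype V]
    (G : SimpleGraph V) [DecidableRel G.Adj]
    (h2conn : ∀ v : V, ((⊤ : G.Subgraph).deleteVerts {v}).coe.Connected)
    (hedges : 2 ≤ G.edgeSet.ncard) (hK4 : ¬ HasK4Subdivision G) :
    ∃ v : V, G.degree v = 2 := by
  by_contra! hdeg
  have hthird := exists_ne_ne_of_two_le_ncard_edgeSet hedges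
  refine hK4 (hasK4Minor_of_isolatedOrHighDegree ?_ fun v => .inr ?_).hasK4Subdivision
  · exact Set.nonempty_of_ncard_ne_zero (by omega)
  have := two_le_ncard_neighborSet h2conn hthird v
  have := ncard_neighborSet_eq_degree (G := G) v ▸ hdeg v
  omega

/-- Dirac's theorem: a simple 2-connected series-parallel graph
(no `K₄`-subdivision) with at least two edges has a vertex of degree 2. -/
theorem seriesParallel_graph_has_degree_two_vertex {V : Type*} [Fintype V]
    (G : SimpleGraph V) [DecidableRel G.Adj] (hconn : G.Connected)
    (h2conn : ∀ v : V, ((⊤ : G.Subgraph).deleteVerts {v}).coe.Connected)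
    (hedges : 2 ≤ G.edgeSet.ncard) (hK4 : ¬ HasK4Subdivision G) :
    ∃ v : V, G.degree v = 2 :=
  seriesParallel_graph_has_degree_two_vertex_general G h2conn hedges hK4

end PaperBC
end

section
/- Let M' be a simple matroid admitting an ordering < under which the minimal broken circuits are pairwise disjoint, and let M = P(M', U_{m,m+1}) be the parallel connection of M' with U_{m,m+1} (m ≥ 2) relative to their unique common element e. Extend < to an ordering ≺ of the ground set of M in which e is the least element of the ground set of U_{m,m+1}. Then the set of minimal broken circuits of (M,≺) equals the set of minimal broken circuits of (M',<) together with the single extra set C_{m+1} − e, where C_{m+1} is the unique circuit of U_{m,m+1}; in particular the minimal broken circuits of (M,≺) are pairwise disjoint. -/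
open Set Polynomial Matroid CategoryTheory

universe u

theorem minimal_or_iff_of_incomparable {β : Type*} [LE β] {P Q : β → Prop} {x : β}
    (h : ∀ ⦃y z⦄, P y → Q z → ¬ y ≤ z ∧ ¬ z ≤ y) :
    Minimal (fun y ↦ P y ∨ Q y) x ↔ Minimal P x ∨ Minimal Q x := by
  refine ⟨Minimal.or, ?_⟩
  rintro (⟨hx, hmin⟩ | ⟨hx, hmin⟩)
  · exact ⟨Or.inl hx, fun y hy hyx ↦ hy.elim (hmin · hyx) fun hQ ↦ ((h hx hQ).2 hyx).elim⟩
  · exact ⟨Or.inr hx, fun y hy hyx ↦ hy.elim (fun hP ↦ ((h hP hx).1 hyx).elim) (hmin · hyx)⟩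

namespace PaperBC

variable {α : Type*} {M N M₁ M₂ : Matroid α} {r r' : α → α → Prop} {e : α} {B C : Set α}

theorem minBrokenCircuit_iff_minimal :
    MinBrokenCircuit r M B ↔ Minimal (BrokenCircuit r M) B := by
  simp only [MinBrokenCircuit, minimal_subset_iff, eq_comm (a := B)]

theorem BrokenCircuit.subset_ground (h : BrokenCircuit r M B) : B ⊆ M.E := by
  obtain ⟨C, f, hC, -, -, rfl⟩ := h
  exact sdiff_subset.trans hC.2.1

theorem BrokenCircuit.nonempty (hM : MSimple M) (h : BrokenCircuit r M B) : B.Nonempty := by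
  obtain ⟨C, f, hC, hf, -, rfl⟩ := h
  have h3 := hM C hC
  apply Set.nonempty_of_ncard_ne_zero
  rw [Set.ncard_sdiff_singleton_of_mem hf]
  omega

theorem brokenCircuit_congr (h : ∀ a ∈ M.E, ∀ b ∈ M.E, (r a b ↔ r' a b)) :
    BrokenCircuit r M = BrokenCircuit r' M := by
  ext B
  constructor <;> rintro ⟨C, f, hC, hf, hfmin, rfl⟩
  · exact ⟨C, f, hC, hf, fun x hx ↦ (h f (hC.2.1 hf) x (hC.2.1 hx)).1 (hfmin x hx), rfl⟩
  · exact ⟨C, f, hC, hf, fun x hx ↦ (h f (hC.2.1 hf) x (hC.2.1 hx)).2 (hfmin x hx), rfl⟩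

theorem IsUnifNearCircuit.mCircuit_iff {m : ℕ} (hU : IsUnifNearCircuit N m) :
    MCircuit N C ↔ C = N.E := by
  obtain ⟨hcard, hindep⟩ := hU
  have hfin : N.E.Finite := Set.finite_of_ncard_pos (by omega)
  constructor
  · intro hC
    by_contra hne
    have hlt := Set.ncard_lt_ncard (hC.2.1.ssubset_of_ne hne) hfin
    exact hC.1 ((hindep C).2 ⟨hC.2.1, by omega⟩)
  · rintro rfl
    refine ⟨fun hI ↦ ?_, subset_rfl, fun D hD ↦ (hindep D).2 ⟨hD.subset, ?_⟩⟩
    · have := ((hindep _).1 hI).2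
      omega
    · have := Set.ncard_lt_ncard hD hfin
      omega

theorem IsUnifNearCircuit.diff_singleton_nonempty {m : ℕ} (hU : IsUnifNearCircuit N m)
    (hm : 1 ≤ m) (he : e ∈ N.E) : (N.E \ {e}).Nonempty := by
  apply Set.nonempty_of_ncard_ne_zero
  rw [Set.ncard_sdiff_singleton_of_mem he, hU.1]
  omega

namespace IsParallelConn

variable (hpc : IsParallelConn M M₁ M₂ e)
include hpc

theorem mem_right : e ∈ M₂.E := (hpc.1.symm ▸ rfl : e ∈ M₁.E ∩ M₂.E).2

theorem eq_of_mem_of_mem {x : α} (h₁ : x ∈ M₁.E) (h₂ : x ∈ M₂.E) : x = e := by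
  have hx : x ∈ M₁.E ∩ M₂.E := ⟨h₁, h₂⟩
  rwa [hpc.1] at hx

theorem disjoint_diff_ground : Disjoint (M₂.E \ {e}) M₁.E :=
  Set.disjoint_left.2 fun _ ⟨hx₂, hxe⟩ hx₁ ↦ hxe (hpc.eq_of_mem_of_mem hx₁ hx₂)

theorem disjoint_brokenCircuit_left (hB : BrokenCircuit r M₁ B) : Disjoint (M₂.E \ {e}) B :=
  hpc.disjoint_diff_ground.mono_right hB.subset_ground

theorem mCircuit_iff : MCircuit M C ↔ (MCircuit M₁ C ∨ MCircuit M₂ C ∨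
    ∃ C₁ C₂, MCircuit M₁ C₁ ∧ MCircuit M₂ C₂ ∧ e ∈ C₁ ∧ e ∈ C₂ ∧ C = (C₁ ∪ C₂) \ {e}) :=
  hpc.2.2.2.2.2.2 C

theorem brokenCircuit_left (hB : BrokenCircuit r M₁ B) : BrokenCircuit r M B := by
  obtain ⟨C, f, hC, hf, hfmin, rfl⟩ := hB
  exact ⟨C, f, hpc.mCircuit_iff.2 (Or.inl hC), hf, hfmin, rfl⟩

theorem brokenCircuit_ground_diff (h₂ : MCircuit M₂ M₂.E) (hleast : ∀ x ∈ M₂.E, r e x) :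
    BrokenCircuit r M (M₂.E \ {e}) :=
  ⟨M₂.E, e, hpc.mCircuit_iff.2 (Or.inr (Or.inl h₂)), hpc.mem_right, hleast, rfl⟩

theorem exists_subset_of_brokenCircuit [IsPartialOrder α r]
    (hU : ∀ C, MCircuit M₂ C ↔ C = M₂.E) (hleast : ∀ x ∈ M₂.E, r e x)
    (hB : BrokenCircuit r M B) : ∃ B₀ ⊆ B, BrokenCircuit r M₁ B₀ ∨ B₀ = M₂.E \ {e} := by
  obtain ⟨C, f, hC, hfC, hfmin, rfl⟩ := hB
  rcases hpc.mCircuit_iff.1 hC with hC₁ | hC₂ | ⟨C₁, C₂, hC₁, hC₂, he₁, -, rfl⟩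
  · exact ⟨_, subset_rfl, Or.inl ⟨C, f, hC₁, hfC, hfmin, rfl⟩⟩
  · obtain rfl := (hU C).1 hC₂
    obtain rfl : f = e := antisymm (hfmin e hpc.mem_right) (hleast f hfC)
    exact ⟨_, subset_rfl, Or.inr rfl⟩
  obtain rfl := (hU C₂).1 hC₂
  by_cases hf₂ : f ∈ M₂.E
  · -- `e` precedes `f`, which precedes everything else in `C₁`
    refine ⟨C₁ \ {e}, fun x ⟨hx, hxe⟩ ↦ ⟨⟨Or.inl hx, hxe⟩, ?_⟩, Or.inl ⟨C₁, e, hC₁, he₁, ?_, rfl⟩⟩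
    · rintro rfl
      exact hxe (hpc.eq_of_mem_of_mem (hC₁.2.1 hx) hf₂)
    · intro x hx
      by_cases hxe : x = e
      · exact hxe ▸ refl_of r e
      · exact trans_of r (hleast f hf₂) (hfmin x ⟨Or.inl hx, hxe⟩)
  · refine ⟨M₂.E \ {e}, fun x ⟨hx, hxe⟩ ↦ ⟨⟨Or.inr hx, hxe⟩, ?_⟩, Or.inr rfl⟩
    rintro rfl
    exact hf₂ hx

end IsParallelConn

theorem minBrokenCircuits_parallelConn_unif_general {α : Type*} (M M' P : Matroid α)
    (e : α) (m : ℕ) (h2 : 2 ≤ m) (hsimple : MSimple M')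
    (hP : IsUnifNearCircuit P m) (hpc : IsParallelConn M M' P e)
    (r' : α → α → Prop)
    (hdisj' : ∀ B B', MinBrokenCircuit r' M' B → MinBrokenCircuit r' M' B' →
      B ≠ B' → Disjoint B B')
    (r : α → α → Prop) (hlin : IsLinearOrder α r)
    (hagree : ∀ a ∈ M'.E, ∀ b ∈ M'.E, (r a b ↔ r' a b))
    (hleast : ∀ x ∈ P.E, r e x) :
    {B | MinBrokenCircuit r M B} =
        {B | MinBrokenCircuit r' M' B} ∪ {P.E \ {e}} ∧
      ∀ B B', MinBrokenCircuit r M B → MinBrokenCircuit r M B' → B ≠ B' →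
        Disjoint B B' := by
  have := hlin
  have hU : ∀ C, MCircuit P C ↔ C = P.E := fun _ ↦ hP.mCircuit_iff
  have hS : (P.E \ {e}).Nonempty := hP.diff_singleton_nonempty (by omega) hpc.mem_right
  have hincomp : ∀ ⦃B B' : Set α⦄, BrokenCircuit r M' B → B' = P.E \ {e} →
      ¬ B ⊆ B' ∧ ¬ B' ⊆ B := by
    rintro B _ hB rfl
    have hdisj := hpc.disjoint_brokenCircuit_left hB
    exact ⟨fun h ↦ (hB.nonempty hsimple).ne_empty (hdisj.symm.eq_bot_of_le h),
      fun h ↦ hS.ne_empty (hdisj.eq_bot_of_le h)⟩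
  have hmin : ∀ B, MinBrokenCircuit r M B ↔ MinBrokenCircuit r' M' B ∨ B = P.E \ {e} := by
    intro B
    simp only [minBrokenCircuit_iff_minimal, ← brokenCircuit_congr hagree]
    rw [minimal_iff_minimal_of_imp_of_forall
      (Q := fun B ↦ BrokenCircuit r M' B ∨ B = P.E \ {e})
      (fun B hB ↦ hB.elim hpc.brokenCircuit_left
        fun h ↦ h ▸ hpc.brokenCircuit_ground_diff ((hU _).2 rfl) hleast)
      (fun B hB ↦ hpc.exists_subset_of_brokenCircuit hU hleast hB),
      minimal_or_iff_of_incomparable hincomp, minimal_eq_iff]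
  have hset : {B | MinBrokenCircuit r M B} = {B | MinBrokenCircuit r' M' B} ∪ {P.E \ {e}} :=
    Set.ext hmin
  refine ⟨hset, fun B B' hB hB' hne ↦ ?_⟩
  have hpw : {B | MinBrokenCircuit r M B}.Pairwise Disjoint := by
    rw [hset, Set.union_singleton, Set.pairwise_insert_of_symm]
    exact ⟨fun B hB B' hB' ↦ hdisj' B B' hB hB',
      fun B hB _ ↦ hpc.disjoint_brokenCircuit_left hB.1⟩
  exact hpw hB hB' hne

/-- minimal broken circuits of a parallel connection with
`U_{m,m+1}`, when `e` is chosen least in the ground set of `U_{m,m+1}`. -/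
theorem minBrokenCircuits_parallelConn_unif {α : Type*} (M M' P : Matroid α)
    (e : α) (m : ℕ) (h2 : 2 ≤ m) (hfin : M.E.Finite) (hsimple : MSimple M')
    (hP : IsUnifNearCircuit P m) (hpc : IsParallelConn M M' P e)
    (r' : α → α → Prop) (hlin' : IsLinearOrder α r')
    (hdisj' : ∀ B B', MinBrokenCircuit r' M' B → MinBrokenCircuit r' M' B' →
      B ≠ B' → Disjoint B B')
    (r : α → α → Prop) (hlin : IsLinearOrder α r)
    (hagree : ∀ a ∈ M'.E, ∀ b ∈ M'.E, (r a b ↔ r' a b))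
    (hleast : ∀ x ∈ P.E, r e x) :
    {B | MinBrokenCircuit r M B} =
        {B | MinBrokenCircuit r' M' B} ∪ {P.E \ {e}} ∧
      ∀ B B', MinBrokenCircuit r M B → MinBrokenCircuit r M B' → B ≠ B' →
        Disjoint B B' :=
  minBrokenCircuits_parallelConn_unif_general M M' P e m h2 hsimple hP hpc r' hdisj' r hlin hagree
    hleast
end PaperBC
end
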